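/- arXiv:2403.02220 — 3 statements merged into one kernel-verified Lean document; each statement's English description precedes it below -/
import Mathlib

section
/- Under condition (C1) and assuming E[‖W_1‖_1] < ∞, for every m = (m_1, …, m_L) ∈ ℤ_+^L one has P(D_1(n) = m) → E[∏_{l=1}^L (c_l W_{1l})^{m_l} e^{−c_l W_{1l}} / m_l!] as n → ∞. -/
/-!
Conditionally on the weights, the layer-`l` degree of node `1` is Poisson or Poisson-binomial,
with success probabilities `g_l(W_{1l} W_{jl} / T_l(n))`, independently over the layers. By the
strong law of large numbers `T_l(n)` grows linearly unless `W_{1l} = 0`, so these probabilities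
are uniformly small and, by (C1), their sum tends to `c_l W_{1l}`. The Poisson limit theorem for
Poisson-binomial laws (squeezing the pmf between multiples of the elementary symmetric function
`e_k(q)`, which tends to `λ^k / k!`) gives almost sure convergence of the conditional pmf, and
dominated convergence finishes the proof.
-/

open MeasureTheory Filter Finset ProbabilityTheory

noncomputable section

def poissonPMF (r : ℝ) (k : ℕ) : ℝ := Real.exp (-r) * r ^ k / (Nat.factorial k)

/-- pmf of a Poisson-binomial distribution (sum of independent Bernoulli(q j)). -/
def pbPMF {n : ℕ} (q : Fin n → ℝ) (k : ℕ) : ℝ :=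
  ∑ S ∈ Finset.powersetCard k Finset.univ, (∏ j ∈ S, q j) * ∏ j ∈ Finset.univ \ S, (1 - q j)

open scoped Topology

lemma poissonPMF_nonneg {r : ℝ} (hr : 0 ≤ r) (k : ℕ) : 0 ≤ _root_.poissonPMF r k := by
  unfold _root_.poissonPMF; positivity

lemma poissonPMF_le_one {r : ℝ} (hr : 0 ≤ r) (k : ℕ) : _root_.poissonPMF r k ≤ 1 := by
  calc _root_.poissonPMF r k = Real.exp (-r) * (r ^ k / k.factorial) := mul_div_assoc _ _ _
    _ ≤ Real.exp (-r) * Real.exp r := by gcongr; exact Real.pow_div_factorial_le_exp r hr k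
    _ = 1 := by rw [← Real.exp_add, neg_add_cancel, Real.exp_zero]

lemma continuous_poissonPMF (k : ℕ) : Continuous fun r => _root_.poissonPMF r k := by
  unfold _root_.poissonPMF; fun_prop

section ElemSymm

variable {ι : Type*}

def elemSymm (u : Finset ι) (q : ι → ℝ) (k : ℕ) : ℝ := ∑ S ∈ u.powersetCard k, ∏ j ∈ S, q j

variable {u : Finset ι} {q : ι → ℝ}

@[simp] lemma elemSymm_zero : elemSymm u q 0 = 1 := by simp [elemSymm]

lemma elemSymm_one : elemSymm u q 1 = ∑ j ∈ u, q j := by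
  simp [elemSymm, powersetCard_one]

lemma elemSymm_nonneg (hq : ∀ j ∈ u, 0 ≤ q j) (k : ℕ) : 0 ≤ elemSymm u q k :=
  sum_nonneg fun _ hS => prod_nonneg fun j hj => hq j ((mem_powersetCard.1 hS).1 hj)

lemma elemSymm_mono {v : Finset ι} (hq : ∀ j ∈ v, 0 ≤ q j) (huv : u ⊆ v) (k : ℕ) :
    elemSymm u q k ≤ elemSymm v q k :=
  sum_le_sum_of_subset_of_nonneg (powersetCard_mono huv) fun _ hS _ =>
    prod_nonneg fun j hj => hq j ((mem_powersetCard.1 hS).1 hj)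

lemma elemSymm_insert [DecidableEq ι] {a : ι} (ha : a ∉ u) (k : ℕ) :
    elemSymm (insert a u) q (k + 1) = elemSymm u q (k + 1) + q a * elemSymm u q k := by
  have haS : ∀ S ∈ u.powersetCard k, a ∉ S := fun S hS h => ha ((mem_powersetCard.1 hS).1 h)
  rw [elemSymm, powersetCard_succ_insert ha, sum_union, sum_image, elemSymm, elemSymm, mul_sum]
  · exact congrArg _ (sum_congr rfl fun S hS => prod_insert (haS S hS))
  · intro S hS T hT hST
    rw [← erase_insert (haS S hS), ← erase_insert (haS T hT), hST]
  · refine disjoint_right.2 fun S hS hS' => ?_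
    obtain ⟨T, -, rfl⟩ := mem_image.1 hS
    exact ha ((mem_powersetCard.1 hS').1 (mem_insert_self a T))

/-- Each `k + 1`-subset is counted once for each of its elements. -/
lemma succ_mul_elemSymm_succ [DecidableEq ι] (k : ℕ) :
    (k + 1 : ℝ) * elemSymm u q (k + 1) = ∑ j ∈ u, q j * elemSymm (u.erase j) q k := by
  have lhs : (k + 1 : ℝ) * elemSymm u q (k + 1)
      = ∑ S ∈ u.powersetCard (k + 1), ∑ j ∈ S, ∏ i ∈ S, q i := by
    rw [elemSymm, mul_sum]
    refine sum_congr rfl fun S hS => ?_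
    rw [sum_const, (mem_powersetCard.1 hS).2, nsmul_eq_mul]
    push_cast; ring
  simp_rw [lhs, elemSymm, mul_sum]
  rw [sum_sigma', sum_sigma']
  refine sum_nbij' (fun x => ⟨x.2, x.1.erase x.2⟩) (fun y => ⟨insert y.1 y.2, y.1⟩)
    ?_ ?_ ?_ ?_ ?_
  · rintro ⟨S, j⟩ hx
    simp only [mem_sigma, mem_powersetCard] at hx ⊢
    obtain ⟨⟨hSu, hcard⟩, hj⟩ := hx
    exact ⟨hSu hj, erase_subset_erase j hSu, by rw [card_erase_of_mem hj, hcard]; rfl⟩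
  · rintro ⟨j, S⟩ hy
    simp only [mem_sigma, mem_powersetCard] at hy ⊢
    obtain ⟨hj, hSu, hcard⟩ := hy
    have hjS : j ∉ S := fun h => notMem_erase j u (hSu h)
    exact ⟨⟨insert_subset hj (hSu.trans (erase_subset j u)),
      by rw [card_insert_of_notMem hjS, hcard]⟩, mem_insert_self j S⟩
  · rintro ⟨S, j⟩ hx
    simp only [mem_sigma] at hx
    simp [insert_erase hx.2]
  · rintro ⟨j, S⟩ hy
    simp only [mem_sigma, mem_powersetCard] at hy
    have hjS : j ∉ S := fun h => notMem_erase j u (hy.2.1 h)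
    simp [erase_insert hjS]
  · rintro ⟨S, j⟩ hx
    exact (mul_prod_erase S q (mem_sigma.1 hx).2).symm

lemma succ_mul_elemSymm_succ_le [DecidableEq ι] (hq : ∀ j ∈ u, 0 ≤ q j) (k : ℕ) :
    (k + 1 : ℝ) * elemSymm u q (k + 1) ≤ (∑ j ∈ u, q j) * elemSymm u q k := by
  rw [succ_mul_elemSymm_succ, sum_mul]
  exact sum_le_sum fun j hj =>
    mul_le_mul_of_nonneg_left (elemSymm_mono hq (erase_subset j u) k) (hq j hj)

lemma le_succ_mul_elemSymm_succ [DecidableEq ι] (hq : ∀ j ∈ u, 0 ≤ q j) (k : ℕ) :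
    (∑ j ∈ u, q j) * elemSymm u q (k + 1) - (∑ j ∈ u, q j ^ 2) * elemSymm u q k
      ≤ (k + 2 : ℝ) * elemSymm u q (k + 2) := by
  have hk : (k + 2 : ℝ) = ((k + 1 : ℕ) : ℝ) + 1 := by push_cast; ring
  rw [hk, succ_mul_elemSymm_succ, sum_mul, sum_mul, ← sum_sub_distrib]
  refine sum_le_sum fun j hj => ?_
  have hins := elemSymm_insert (q := q) (notMem_erase j u) k
  rw [insert_erase hj] at hins
  have hle := elemSymm_mono hq (erase_subset j u) k
  have hnn := elemSymm_nonneg (fun i hi => hq i (erase_subset j u hi)) k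
  nlinarith [hq j hj]

end ElemSymm

lemma tendsto_elemSymm {lam : ℝ} {q : (n : ℕ) → Fin n → ℝ} (hq : ∀ n j, 0 ≤ q n j)
    (hs : Tendsto (fun n => ∑ j, q n j) atTop (𝓝 lam))
    (hsq : Tendsto (fun n => ∑ j, q n j ^ 2) atTop (𝓝 0)) (k : ℕ) :
    Tendsto (fun n => elemSymm univ (q n) k) atTop (𝓝 (lam ^ k / k.factorial)) := by
  suffices ∀ k, Tendsto (fun n => elemSymm univ (q n) k) atTop (𝓝 (lam ^ k / k.factorial)) ∧
      Tendsto (fun n => elemSymm univ (q n) (k + 1)) atTop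
        (𝓝 (lam ^ (k + 1) / (k + 1).factorial)) from (this k).1
  intro k
  induction k with
  | zero => exact ⟨by simp, by simpa [elemSymm_one] using hs⟩
  | succ k ih =>
    refine ⟨ih.2, ?_⟩
    have hlim : lam * (lam ^ (k + 1) / (k + 1).factorial) / (k + 2 : ℝ)
        = lam ^ (k + 2) / (k + 2).factorial := by
      rw [Nat.factorial_succ (k + 1)]; push_cast; field_simp; ring
    have hupper := (hs.mul ih.2).div_const (k + 2 : ℝ)
    have hlower := ((hs.mul ih.2).sub (hsq.mul ih.1)).div_const (k + 2 : ℝ)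
    rw [zero_mul, sub_zero, hlim] at hlower
    rw [hlim] at hupper
    refine tendsto_of_tendsto_of_tendsto_of_le_of_le hlower hupper (fun n => ?_) (fun n => ?_)
    · rw [div_le_iff₀ (by positivity)]
      simpa [mul_comm] using le_succ_mul_elemSymm_succ (fun j _ => hq n j) k
    · rw [le_div_iff₀ (by positivity), mul_comm]
      exact_mod_cast succ_mul_elemSymm_succ_le (fun j _ => hq n j) (k + 1)

section PoissonBinomial

variable {n : ℕ} {q : Fin n → ℝ}

lemma pbPMF_nonneg (hq0 : ∀ j, 0 ≤ q j) (hq1 : ∀ j, q j ≤ 1) (k : ℕ) : 0 ≤ pbPMF q k :=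
  sum_nonneg fun _ _ => mul_nonneg (prod_nonneg fun j _ => hq0 j)
    (prod_nonneg fun j _ => sub_nonneg.2 (hq1 j))

lemma pbPMF_le_one (hq0 : ∀ j, 0 ≤ q j) (hq1 : ∀ j, q j ≤ 1) (k : ℕ) : pbPMF q k ≤ 1 := by
  have hsum : ∑ S ∈ (univ : Finset (Fin n)).powerset,
      (∏ j ∈ S, q j) * ∏ j ∈ univ \ S, (1 - q j) = 1 := by
    rw [← prod_add]; simp
  refine hsum ▸ sum_le_sum_of_subset_of_nonneg (fun S hS => ?_) fun _ _ _ =>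
    mul_nonneg (prod_nonneg fun j _ => hq0 j) (prod_nonneg fun j _ => sub_nonneg.2 (hq1 j))
  exact mem_powerset.2 (mem_powersetCard.1 hS).1

lemma elemSymm_mul_prod_le_pbPMF (hq0 : ∀ j, 0 ≤ q j) (hq1 : ∀ j, q j ≤ 1) (k : ℕ) :
    elemSymm univ q k * ∏ j, (1 - q j) ≤ pbPMF q k := by
  rw [elemSymm, pbPMF, sum_mul]
  refine sum_le_sum fun S _ => ?_
  rw [← prod_sdiff (subset_univ S), ← mul_assoc, mul_comm (∏ j ∈ S, q j)]
  refine mul_le_of_le_one_right ?_ ?_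
  · exact mul_nonneg (prod_nonneg fun j _ => sub_nonneg.2 (hq1 j)) (prod_nonneg fun j _ => hq0 j)
  · exact prod_le_one (fun j _ => sub_nonneg.2 (hq1 j)) fun j _ => by linarith [hq0 j]

lemma pbPMF_mul_le {b : ℝ} (hq0 : ∀ j, 0 ≤ q j) (hqb : ∀ j, q j ≤ b) (hb : b ≤ 1) (k : ℕ) :
    pbPMF q k * (1 - b) ^ k ≤ elemSymm univ q k * ∏ j, (1 - q j) := by
  rw [elemSymm, pbPMF, sum_mul, sum_mul]
  refine sum_le_sum fun S hS => ?_
  have hb' : (1 - b) ^ k ≤ ∏ j ∈ S, (1 - q j) := by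
    rw [← (mem_powersetCard.1 hS).2, ← prod_const]
    exact prod_le_prod (fun _ _ => sub_nonneg.2 hb) fun j _ => by linarith [hqb j]
  calc (∏ j ∈ S, q j) * (∏ j ∈ univ \ S, (1 - q j)) * (1 - b) ^ k
      ≤ (∏ j ∈ S, q j) * (∏ j ∈ univ \ S, (1 - q j)) * ∏ j ∈ S, (1 - q j) := by
        refine mul_le_mul_of_nonneg_left hb' (mul_nonneg (prod_nonneg fun j _ => hq0 j) ?_)
        exact prod_nonneg fun j _ => by linarith [hqb j]
    _ = (∏ j ∈ S, q j) * ∏ j, (1 - q j) := by rw [mul_assoc, prod_sdiff (subset_univ S)]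

lemma exp_neg_le_one_sub {x : ℝ} (hx : x ≤ 1 / 2) :
    Real.exp (-(x + 2 * x ^ 2)) ≤ 1 - x := by
  have h1x : 0 < 1 - x := by linarith
  calc Real.exp (-(x + 2 * x ^ 2)) ≤ Real.exp (1 - (1 - x)⁻¹) := by
        gcongr
        rw [le_sub_iff_add_le, ← le_sub_iff_add_le', inv_le_iff_one_le_mul₀ h1x]
        nlinarith
    _ ≤ Real.exp (Real.log (1 - x)) := by gcongr; exact Real.one_sub_inv_le_log_of_pos h1x
    _ = 1 - x := Real.exp_log h1x

lemma exp_neg_le_prod_one_sub (hq : ∀ j, q j ≤ 1 / 2) :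
    Real.exp (-(∑ j, q j + 2 * ∑ j, q j ^ 2)) ≤ ∏ j, (1 - q j) := by
  rw [mul_sum, ← sum_add_distrib, ← sum_neg_distrib, Real.exp_sum]
  exact prod_le_prod (fun _ _ => (Real.exp_pos _).le) fun j _ => exp_neg_le_one_sub (hq j)

lemma prod_one_sub_le_exp_neg (hq1 : ∀ j, q j ≤ 1) :
    ∏ j, (1 - q j) ≤ Real.exp (-∑ j, q j) := by
  rw [← sum_neg_distrib, Real.exp_sum]
  exact prod_le_prod (fun j _ => sub_nonneg.2 (hq1 j)) fun j _ => Real.one_sub_le_exp_neg (q j)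

end PoissonBinomial

lemma tendsto_pbPMF {lam : ℝ} {q : (n : ℕ) → Fin n → ℝ} {b : ℕ → ℝ} (hq0 : ∀ n j, 0 ≤ q n j)
    (hqb : ∀ᶠ n in atTop, ∀ j, q n j ≤ b n) (hb : Tendsto b atTop (𝓝 0))
    (hs : Tendsto (fun n => ∑ j, q n j) atTop (𝓝 lam)) (k : ℕ) :
    Tendsto (fun n => pbPMF (q n) k) atTop (𝓝 (_root_.poissonPMF lam k)) := by
  have hsmall : ∀ᶠ n in atTop, (∀ j, q n j ≤ b n) ∧ b n ≤ 1 / 2 :=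
    hqb.and (hb.eventually (eventually_le_nhds (by norm_num)))
  have hsq : Tendsto (fun n => ∑ j, q n j ^ 2) atTop (𝓝 0) := by
    have hbs := hb.mul hs
    rw [zero_mul] at hbs
    refine tendsto_of_tendsto_of_tendsto_of_le_of_le' tendsto_const_nhds hbs
      (Eventually.of_forall fun n => sum_nonneg fun j _ => sq_nonneg _) ?_
    filter_upwards [hqb] with n hn
    rw [mul_sum]
    exact sum_le_sum fun j _ => by rw [sq]; exact mul_le_mul_of_nonneg_right (hn j) (hq0 n j)
  have he := tendsto_elemSymm hq0 hs hsq k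
  have hpoisson : _root_.poissonPMF lam k = lam ^ k / k.factorial * Real.exp (-lam) := by
    rw [_root_.poissonPMF]; ring
  have hlower : Tendsto (fun n => elemSymm univ (q n) k *
      Real.exp (-(∑ j, q n j + 2 * ∑ j, q n j ^ 2))) atTop (𝓝 (_root_.poissonPMF lam k)) := by
    have := he.mul ((Real.continuous_exp.tendsto _).comp (hs.add (hsq.const_mul 2)).neg)
    simpa [hpoisson] using this
  have hupper : Tendsto (fun n => elemSymm univ (q n) k * Real.exp (-∑ j, q n j) / (1 - b n) ^ k)
      atTop (𝓝 (_root_.poissonPMF lam k)) := by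
    have hden : Tendsto (fun n => (1 - b n) ^ k) atTop (𝓝 1) := by
      simpa using ((tendsto_const_nhds (x := (1 : ℝ))).sub hb).pow k
    rw [hpoisson, ← div_one (_ * _)]
    exact (he.mul ((Real.continuous_exp.tendsto _).comp hs.neg)).div hden one_ne_zero
  refine tendsto_of_tendsto_of_tendsto_of_le_of_le' hlower hupper ?_ ?_
  all_goals filter_upwards [hsmall] with n ⟨hqbn, hbn⟩
  · have hq1 : ∀ j, q n j ≤ 1 / 2 := fun j => (hqbn j).trans hbn
    refine le_trans ?_ (elemSymm_mul_prod_le_pbPMF (hq0 n) (fun j => (hq1 j).trans (by norm_num)) k)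
    exact mul_le_mul_of_nonneg_left (exp_neg_le_prod_one_sub hq1)
      (elemSymm_nonneg (fun j _ => hq0 n j) k)
  · rw [le_div_iff₀ (pow_pos (by linarith) k)]
    refine (pbPMF_mul_le (hq0 n) hqbn (by linarith) k).trans ?_
    exact mul_le_mul_of_nonneg_left
      (prod_one_sub_le_exp_neg fun j => by linarith [hqbn j])
      (elemSymm_nonneg (fun j _ => hq0 n j) k)

section ConditionC1

variable {g : ℝ → ℝ} {c M δ ν : ℝ}

lemma abs_sub_le_of_C1 (hM : 0 ≤ M) (hν : 0 ≤ ν)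
    (hC1 : ∀ x : ℝ, 0 ≤ x → x < δ → |g x - c * x| ≤ M * x ^ (1 + ν))
    {x t : ℝ} (hx : 0 ≤ x) (hxt : x ≤ t) (ht : t < δ) :
    |g x - c * x| ≤ M * t ^ ν * x := by
  refine (hC1 x hx (hxt.trans_lt ht)).trans ?_
  rw [Real.rpow_add' hx (by linarith), Real.rpow_one, mul_comm x, ← mul_assoc]
  gcongr

variable (hM : 0 ≤ M) (hν : 0 < ν) (hδ : 0 < δ)
  (hC1 : ∀ x : ℝ, 0 ≤ x → x < δ → |g x - c * x| ≤ M * x ^ (1 + ν))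
  {x : ℕ → ℕ → ℝ} {b : ℕ → ℝ} (hx0 : ∀ n j, 0 ≤ x n j)
  (hxb : ∀ᶠ n in atTop, ∀ j < n, x n j ≤ b n) (hb : Tendsto b atTop (𝓝 0))
include hM hν hδ hC1 hx0 hxb hb

lemma tendsto_sum_comp_of_C1 {σ : ℝ} (hs : Tendsto (fun n => ∑ j ∈ range n, x n j) atTop (𝓝 σ)) :
    Tendsto (fun n => ∑ j ∈ range n, g (x n j)) atTop (𝓝 (c * σ)) := by
  have herr : Tendsto (fun n => M * b n ^ ν * ∑ j ∈ range n, x n j) atTop (𝓝 0) := by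
    simpa using ((hb.rpow_const_nhds_zero hν).const_mul M).mul hs
  have hdiff : Tendsto (fun n => ∑ j ∈ range n, g (x n j) - c * ∑ j ∈ range n, x n j)
      atTop (𝓝 0) := by
    refine squeeze_zero_norm' ?_ herr
    filter_upwards [hxb, hb.eventually (eventually_lt_nhds hδ)] with n hn hbδ
    rw [Real.norm_eq_abs, mul_sum, ← sum_sub_distrib, mul_sum]
    exact (abs_sum_le_sum_abs _ _).trans (sum_le_sum fun j hj =>
      abs_sub_le_of_C1 hM hν.le hC1 (hx0 n j) (hn j (mem_range.1 hj)) hbδ)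
  simpa using hdiff.add (hs.const_mul c)

lemma eventually_comp_le_of_C1 (hc : 0 ≤ c) :
    ∀ᶠ n in atTop, ∀ j < n, g (x n j) ≤ (c + M * b n ^ ν) * b n := by
  filter_upwards [hxb, hb.eventually (eventually_lt_nhds hδ)] with n hn hbδ j hj
  have h := abs_le.1 (abs_sub_le_of_C1 hM hν.le hC1 (hx0 n j) (hn j hj) hbδ)
  have hbn : 0 ≤ b n := (hx0 n j).trans (hn j hj)
  have hg : g (x n j) ≤ (c + M * b n ^ ν) * x n j := by linarith [h.2]
  exact hg.trans (mul_le_mul_of_nonneg_left (hn j hj) (by positivity))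

end ConditionC1

lemma tendsto_div_natCast_of_tendsto_average {a : ℕ → ℝ} {mu : ℝ}
    (h : Tendsto (fun n => (∑ i ∈ range n, a i) / n) atTop (𝓝 mu)) :
    Tendsto (fun n => a n / n) atTop (𝓝 0) := by
  -- `a n / n` is a difference of two consecutive averages, suitably rescaled
  have hdiff : Tendsto (fun n : ℕ => (1 + 1 / (n : ℝ)) * ((∑ i ∈ range (n + 1), a i) / (n + 1 : ℕ))
      - (∑ i ∈ range n, a i) / n) atTop (𝓝 ((1 + 0) * mu - mu)) :=
    ((tendsto_const_nhds.add tendsto_one_div_atTop_nhds_zero_nat).mul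
      (h.comp (tendsto_add_atTop_nat 1))).sub h
  rw [add_zero, one_mul, sub_self] at hdiff
  refine hdiff.congr' ?_
  filter_upwards [eventually_ne_atTop 0] with n hn
  rw [sum_range_succ]
  push_cast
  field_simp
  ring

lemma eventually_forall_lt_le_mul {a : ℕ → ℝ} (ha : ∀ n, 0 ≤ a n)
    (h : Tendsto (fun n => a n / n) atTop (𝓝 0)) {t : ℝ} (ht : 0 < t) :
    ∀ᶠ n in atTop, ∀ j < n, a j ≤ t * n := by
  obtain ⟨N, hN⟩ := eventually_atTop.1
    ((h.eventually (eventually_le_nhds ht)).and (eventually_gt_atTop 0))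
  have hhead : ∀ᶠ n : ℕ in atTop, ∑ i ∈ range N, a i ≤ t * n :=
    (tendsto_natCast_atTop_atTop.const_mul_atTop ht).eventually_ge_atTop _
  filter_upwards [hhead] with n hn j hj
  rcases lt_or_ge j N with hjN | hjN
  · exact (single_le_sum (fun i _ => ha i) (mem_range.2 hjN)).trans hn
  · obtain ⟨hjt, hj0⟩ := hN j hjN
    rw [div_le_iff₀ (by exact_mod_cast hj0)] at hjt
    exact hjt.trans (by gcongr)

lemma exists_tendsto_zero_bound {x : ℕ → ℕ → ℝ}
    (h : ∀ ε > 0, ∀ᶠ n in atTop, ∀ j < n, x n j ≤ ε) :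
    ∃ b : ℕ → ℝ, Tendsto b atTop (𝓝 0) ∧ ∀ n, ∀ j < n, x n j ≤ b n := by
  refine ⟨fun n => ((range n).sup fun j => (x n j).toNNReal : NNReal), ?_, fun n j hj => ?_⟩
  · refine tendsto_order.2 ⟨fun a ha => .of_forall fun n => ha.trans_le (NNReal.coe_nonneg _),
      fun a ha => ?_⟩
    filter_upwards [h (a / 2) (by linarith)] with n hn
    have : ((range n).sup fun j => (x n j).toNNReal) ≤ (a / 2).toNNReal :=
      Finset.sup_le fun j hj => Real.toNNReal_le_toNNReal (hn j (mem_range.1 hj))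
    have := NNReal.coe_le_coe.2 this
    rw [Real.coe_toNNReal _ (by linarith)] at this
    linarith
  · exact (Real.le_coe_toNNReal _).trans (NNReal.coe_le_coe.2
      (le_sup (f := fun j => (x n j).toNNReal) (mem_range.2 hj)))

/-- The argument `W_{1l} W_{jl} / T_l(n)` of `g_l` in the edge intensities of node `1`
(indexed `0` here), for the weights `a i = W_{il}` of one layer. -/
def weightRatio (a : ℕ → ℝ) (n j : ℕ) : ℝ := a 0 * a j / ∑ i ∈ range n, a i

section WeightRatio

variable {a : ℕ → ℝ} {mu : ℝ}

lemma weightRatio_nonneg (ha : ∀ i, 0 ≤ a i) (n j : ℕ) : 0 ≤ weightRatio a n j :=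
  div_nonneg (mul_nonneg (ha 0) (ha j)) (sum_nonneg fun i _ => ha i)

lemma eventually_mul_le_sum (havg : Tendsto (fun n => (∑ i ∈ range n, a i) / n) atTop (𝓝 mu))
    (hmu : 0 < mu) : ∀ᶠ n : ℕ in atTop, 0 < n ∧ mu / 2 * n ≤ ∑ i ∈ range n, a i := by
  filter_upwards [havg.eventually (eventually_ge_nhds (by linarith : mu / 2 < mu)),
    eventually_gt_atTop 0] with n hn hn0
  exact ⟨hn0, (le_div_iff₀ (by exact_mod_cast hn0)).1 hn⟩

variable (havg : Tendsto (fun n => (∑ i ∈ range n, a i) / n) atTop (𝓝 mu))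
  (hpos : a 0 = 0 ∨ 0 < mu)
include havg hpos

lemma eventually_sum_weightRatio : ∀ᶠ n in atTop, ∑ j ∈ range n, weightRatio a n j = a 0 := by
  rcases hpos with h0 | hmu
  · exact .of_forall fun n => by simp [weightRatio, h0]
  filter_upwards [eventually_mul_le_sum havg hmu] with n ⟨hn0, hT⟩
  have hT0 : 0 < ∑ i ∈ range n, a i := (by positivity : 0 < mu / 2 * n).trans_le hT
  simp only [weightRatio]
  rw [← sum_div, ← mul_sum, mul_div_cancel_right₀ _ hT0.ne']

lemma eventually_weightRatio_le (ha : ∀ i, 0 ≤ a i) {ε : ℝ} (hε : 0 < ε) :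
    ∀ᶠ n in atTop, ∀ j < n, weightRatio a n j ≤ ε := by
  rcases hpos with h0 | hmu
  · exact .of_forall fun n j _ => by simp [weightRatio, h0, hε.le]
  have ht : 0 < ε * (mu / 2) / (a 0 + 1) := by have := ha 0; positivity
  filter_upwards [eventually_mul_le_sum havg hmu,
    eventually_forall_lt_le_mul ha (tendsto_div_natCast_of_tendsto_average havg) ht]
    with n ⟨hn0, hT⟩ hle j hj
  have hT0 : 0 < ∑ i ∈ range n, a i := (by positivity : 0 < mu / 2 * n).trans_le hT
  rw [weightRatio, div_le_iff₀ hT0]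
  calc a 0 * a j ≤ a 0 * (ε * (mu / 2) / (a 0 + 1) * n) := by gcongr; exacts [ha 0, hle j hj]
    _ = a 0 / (a 0 + 1) * (ε * (mu / 2 * n)) := by ring
    _ ≤ ε * (mu / 2 * n) := by
      have := ha 0
      exact mul_le_of_le_one_left (by positivity) ((div_le_one (by positivity)).2 (by linarith))
    _ ≤ ε * ∑ i ∈ range n, a i := by gcongr

end WeightRatio

/-- The conditional pmf of the layer-`l` degree of node `1` given the weights `a i = W_{il}`:
a Poisson law in a multigraph layer, a Poisson-binomial law in a simple-graph layer. -/
def layerPMF (poissonLayer : Prop) [Decidable poissonLayer] (g : ℝ → ℝ) (a : ℕ → ℝ)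
    (n k : ℕ) : ℝ :=
  if poissonLayer then _root_.poissonPMF (∑ j ∈ range n, g (weightRatio a n j)) k
  else pbPMF (fun j : Fin n => g (weightRatio a n j)) k

section LayerPMF

@[fun_prop]
lemma measurable_weightRatio (n j : ℕ) : Measurable fun a : ℕ → ℝ => weightRatio a n j := by
  unfold weightRatio; fun_prop

variable {p : Prop} [Decidable p] {g : ℝ → ℝ}

lemma measurable_layerPMF (hg : Measurable g) (n k : ℕ) :
    Measurable fun a : ℕ → ℝ => layerPMF p g a n k := by
  unfold layerPMF pbPMF
  split_ifs
  · exact (continuous_poissonPMF k).measurable.comp (by fun_prop)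
  · fun_prop

lemma layerPMF_mem_Icc {a : ℕ → ℝ} (ha : ∀ i, 0 ≤ a i) (hg0 : ∀ x, 0 ≤ x → 0 ≤ g x)
    (hg1 : ¬p → ∀ x, 0 ≤ x → g x ≤ 1) (n k : ℕ) : layerPMF p g a n k ∈ Set.Icc 0 1 := by
  have hq0 : ∀ j, 0 ≤ g (weightRatio a n j) := fun j => hg0 _ (weightRatio_nonneg ha n j)
  unfold layerPMF
  split_ifs with hp
  · have hs := sum_nonneg fun j (_ : j ∈ range n) => hq0 j
    exact ⟨poissonPMF_nonneg hs k, poissonPMF_le_one hs k⟩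
  · have hq1 : ∀ j : Fin n, g (weightRatio a n j) ≤ 1 :=
      fun j => hg1 hp _ (weightRatio_nonneg ha n j)
    exact ⟨pbPMF_nonneg (fun j => hq0 j) hq1 k, pbPMF_le_one (fun j => hq0 j) hq1 k⟩

lemma tendsto_layerPMF {c M δ ν mu : ℝ} (hc : 0 ≤ c) (hM : 0 ≤ M) (hν : 0 < ν) (hδ : 0 < δ)
    (hC1 : ∀ x : ℝ, 0 ≤ x → x < δ → |g x - c * x| ≤ M * x ^ (1 + ν))
    (hg0 : ∀ x, 0 ≤ x → 0 ≤ g x) {a : ℕ → ℝ} (ha : ∀ i, 0 ≤ a i)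
    (havg : Tendsto (fun n => (∑ i ∈ range n, a i) / n) atTop (𝓝 mu))
    (hpos : a 0 = 0 ∨ 0 < mu) (k : ℕ) :
    Tendsto (fun n => layerPMF p g a n k) atTop (𝓝 (_root_.poissonPMF (c * a 0) k)) := by
  obtain ⟨b, hb, hxb⟩ := exists_tendsto_zero_bound fun ε hε =>
    eventually_weightRatio_le havg hpos ha hε
  have hsum : Tendsto (fun n => ∑ j ∈ range n, g (weightRatio a n j)) atTop (𝓝 (c * a 0)) :=
    tendsto_sum_comp_of_C1 hM hν hδ hC1 (weightRatio_nonneg ha) (.of_forall hxb) hb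
      (tendsto_const_nhds.congr' ((eventually_sum_weightRatio havg hpos).mono fun _ h => h.symm))
  unfold layerPMF
  split_ifs
  · exact ((continuous_poissonPMF k).tendsto _).comp hsum
  · refine tendsto_pbPMF (b := fun n => (c + M * b n ^ ν) * b n)
      (fun n j => hg0 _ (weightRatio_nonneg ha n j)) ?_ ?_
      (hsum.congr fun n => (Fin.sum_univ_eq_sum_range (fun j => g (weightRatio a n j)) n).symm) k
    · filter_upwards [eventually_comp_le_of_C1 hM hν hδ hC1 (weightRatio_nonneg ha)
        (.of_forall hxb) hb hc] with n hn j using hn j j.isLt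
    · simpa using ((hb.rpow_const_nhds_zero hν).const_mul M).const_add c |>.mul hb

end LayerPMF

lemma ae_exists_tendsto_average {Ω : Type*} [MeasurableSpace Ω] {P : Measure Ω}
    {X : ℕ → Ω → ℝ} (hX0 : 0 ≤ X 0) (hint : Integrable (X 0) P)
    (hindep : Pairwise fun i j => IndepFun (X i) (X j) P)
    (hident : ∀ i, IdentDistrib (X i) (X 0) P P) :
    ∀ᵐ ω ∂P, ∃ mu, Tendsto (fun n => (∑ i ∈ range n, X i ω) / n) atTop (𝓝 mu) ∧
      (X 0 ω = 0 ∨ 0 < mu) := by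
  have hslln : ∀ᵐ ω ∂P, Tendsto (fun n => (∑ i ∈ range n, X i ω) / n) atTop (𝓝 P[X 0]) := by
    filter_upwards [strong_law_ae X hint hindep hident] with ω hω
    simpa [div_eq_inv_mul] using hω
  rcases (integral_nonneg hX0).eq_or_lt with hmu | hmu
  · filter_upwards [hslln, (integral_eq_zero_iff_of_nonneg hX0 hint).1 hmu.symm] with ω h h0
    exact ⟨_, h, .inl h0⟩
  · filter_upwards [hslln] with ω h
    exact ⟨_, h, .inr hmu⟩

lemma ae_exists_tendsto_average_apply {Ω ι : Type*} [MeasurableSpace Ω] {P : Measure Ω}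
    [Fintype ι] {W : ℕ → Ω → ι → ℝ} (hWmeas : ∀ i, Measurable (W i)) (hWindep : iIndepFun W P)
    (hWident : ∀ i, Measure.map (W i) P = Measure.map (W 0) P) (hWnonneg : ∀ i ω l, 0 ≤ W i ω l)
    (hWint : Integrable (fun ω => ∑ l, W 0 ω l) P) (l : ι) :
    ∀ᵐ ω ∂P, ∃ mu, Tendsto (fun n => (∑ i ∈ range n, W i ω l) / n) atTop (𝓝 mu) ∧
      (W 0 ω l = 0 ∨ 0 < mu) := by
  have hint : Integrable (fun ω => W 0 ω l) P := by
    refine hWint.mono' ((measurable_pi_apply l).comp (hWmeas 0)).aestronglyMeasurable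
      (.of_forall fun ω => ?_)
    rw [Real.norm_of_nonneg (hWnonneg 0 ω l)]
    exact single_le_sum (fun l' _ => hWnonneg 0 ω l') (mem_univ l)
  exact ae_exists_tendsto_average (fun ω => hWnonneg 0 ω l) hint
    (fun i j hij => (hWindep.indepFun hij).comp (measurable_pi_apply l) (measurable_pi_apply l))
    (fun i => IdentDistrib.comp ⟨(hWmeas i).aemeasurable, (hWmeas 0).aemeasurable, hWident i⟩
      (measurable_pi_apply l))

lemma tendsto_toReal_lintegral_of_le_one {α : Type*} [MeasurableSpace α] {μ : Measure α}
    [IsFiniteMeasure μ] {F : ℕ → α → ENNReal} {f : α → ENNReal} (hF : ∀ n, Measurable (F n))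
    (hle : ∀ n a, F n a ≤ 1) (hlim : ∀ᵐ a ∂μ, Tendsto (F · a) atTop (𝓝 (f a))) :
    Tendsto (fun n => (∫⁻ a, F n a ∂μ).toReal) atTop (𝓝 (∫⁻ a, f a ∂μ).toReal) := by
  have hf : ∫⁻ a, f a ∂μ ≠ ⊤ := by
    refine ne_top_of_le_ne_top (measure_ne_top μ Set.univ) ?_
    rw [← setLIntegral_one, Measure.restrict_univ]
    exact lintegral_mono_ae (hlim.mono fun a h => le_of_tendsto' h fun n => hle n a)
  exact (ENNReal.tendsto_toReal hf).comp
    (tendsto_lintegral_of_dominated_convergence 1 hF (fun n => .of_forall (hle n)) (by simp) hlim)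

theorem stmt0_general {Ω : Type} [MeasurableSpace Ω] (P : Measure Ω) [IsProbabilityMeasure P]
    (L : ℕ) (L1 : Finset (Fin L))
    (W : ℕ → Ω → Fin L → ℝ)
    (hWmeas : ∀ i, Measurable (W i))
    (hWindep : iIndepFun W P)
    (hWident : ∀ i, Measure.map (W i) P = Measure.map (W 0) P)
    (hWnonneg : ∀ i ω l, 0 ≤ W i ω l)
    (hWint : Integrable (fun ω => ∑ l, W 0 ω l) P)
    (g : Fin L → ℝ → ℝ) (c : Fin L → ℝ) (M δ ν : ℝ)
    (hgmeas : ∀ l, Measurable (g l))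
    (hgnonneg : ∀ l x, 0 ≤ x → 0 ≤ g l x)
    (hgle1 : ∀ l, l ∉ L1 → ∀ x : ℝ, 0 ≤ x → g l x ≤ 1)
    (hc : ∀ l, 0 < c l) (hM : 0 < M) (hδ : 0 < δ) (hν : 0 < ν)
    (hC1 : ∀ l, ∀ x : ℝ, 0 ≤ x → x < δ → |g l x - c l * x| ≤ M * x ^ (1 + ν))
    (D : ℕ → Ω → Fin L → ℕ)
    -- conditional law of D₁(n) given the weights: independent coordinates,
    -- Poisson(Σ_j g_l(W_{1l}W_{jl}/T_l(n))) for l ∈ L1, Poisson-binomial otherwise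
    (hD : ∀ n : ℕ, ∀ m : Fin L → ℕ, ∀ s : Set (ℕ → Fin L → ℝ), MeasurableSet s →
      P ({ω | D n ω = m} ∩ {ω | (fun i => W i ω) ∈ s})
        = ∫⁻ ω in {ω | (fun i => W i ω) ∈ s},
            ENNReal.ofReal (∏ l,
              if l ∈ L1 then
                poissonPMF (∑ j ∈ Finset.range n,
                  g l (W 0 ω l * W j ω l / (∑ i ∈ Finset.range n, W i ω l))) (m l)
              else
                pbPMF (fun j : Fin n =>
                  g l (W 0 ω l * W (j : ℕ) ω l / (∑ i ∈ Finset.range n, W i ω l))) (m l)) ∂P)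
    (m : Fin L → ℕ) :
    Tendsto (fun n : ℕ => (P {ω | D n ω = m}).toReal)
      atTop
      (nhds ((∫⁻ ω, ENNReal.ofReal (∏ l, poissonPMF (c l * W 0 ω l) (m l)) ∂P).toReal)) := by
  have hP : ∀ n, P {ω | D n ω = m} =
      ∫⁻ ω, ENNReal.ofReal (∏ l, layerPMF (l ∈ L1) (g l) (W · ω l) n (m l)) ∂P := fun n => by
    have h := hD n m Set.univ MeasurableSet.univ
    simp only [Set.mem_univ, Set.ofPred_true, Set.inter_univ, Measure.restrict_univ] at h
    exact h
  simp_rw [hP]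
  refine tendsto_toReal_lintegral_of_le_one (fun n => ?_) (fun n ω => ?_) ?_
  · exact ENNReal.measurable_ofReal.comp (Finset.measurable_prod _ fun l _ =>
      (measurable_layerPMF (hgmeas l) n (m l)).comp (measurable_pi_lambda _ fun i =>
        (measurable_pi_apply l).comp (hWmeas i)))
  · have h := fun l => layerPMF_mem_Icc (p := l ∈ L1) (a := (W · ω l)) (fun i => hWnonneg i ω l)
      (hgnonneg l) (hgle1 l) n (m l)
    exact ENNReal.ofReal_le_one.2 (prod_le_one (fun l _ => (h l).1) fun l _ => (h l).2)
  · filter_upwards [ae_all_iff.2 fun l =>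
      ae_exists_tendsto_average_apply hWmeas hWindep hWident hWnonneg hWint l] with ω hω
    refine (ENNReal.continuous_ofReal.tendsto _).comp (tendsto_finsetProd _ fun l _ => ?_)
    obtain ⟨mu, havg, hpos⟩ := hω l
    exact tendsto_layerPMF (hc l).le hM.le hν hδ (hC1 l) (hgnonneg l) (fun i => hWnonneg i ω l)
      havg hpos (m l)

/-- Lemma `typdeg`: In the MIRG model, under (C1) and `E[‖W₁‖₁] < ∞`,
for every `m ∈ ℤ₊^L`, `P(D₁(n) = m) → E[∏_l (c_l W_{1l})^{m_l} e^{−c_l W_{1l}}/m_l!]`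
as `n → ∞`.  The conditional law of the degree vector `D₁(n)` given the weights
(independent coordinates, Poisson in layers `L1`, Poisson-binomial in the other
layers) is encoded by the hypothesis `hD`. -/
theorem stmt0 {Ω : Type} [MeasurableSpace Ω] (P : Measure Ω) [IsProbabilityMeasure P]
    (L : ℕ) (hL : 1 ≤ L) (L1 : Finset (Fin L))
    (W : ℕ → Ω → Fin L → ℝ)
    (hWmeas : ∀ i, Measurable (W i))
    (hWindep : iIndepFun W P)
    (hWident : ∀ i, Measure.map (W i) P = Measure.map (W 0) P)
    (hWnonneg : ∀ i ω l, 0 ≤ W i ω l)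
    (hWcont : ∀ x : Fin L → ℝ, P {ω | W 0 ω = x} = 0)
    (hWint : Integrable (fun ω => ∑ l, W 0 ω l) P)
    (g : Fin L → ℝ → ℝ) (c : Fin L → ℝ) (M δ ν : ℝ)
    (hgmeas : ∀ l, Measurable (g l))
    (hgnonneg : ∀ l x, 0 ≤ x → 0 ≤ g l x)
    (hgle1 : ∀ l, l ∉ L1 → ∀ x : ℝ, 0 ≤ x → g l x ≤ 1)
    (hc : ∀ l, 0 < c l) (hM : 0 < M) (hδ : 0 < δ) (hν : 0 < ν)
    (hC1 : ∀ l, ∀ x : ℝ, 0 ≤ x → x < δ → |g l x - c l * x| ≤ M * x ^ (1 + ν))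
    (D : ℕ → Ω → Fin L → ℕ)
    (hDmeas : ∀ n, Measurable (D n))
    -- conditional law of D₁(n) given the weights: independent coordinates,
    -- Poisson(Σ_j g_l(W_{1l}W_{jl}/T_l(n))) for l ∈ L1, Poisson-binomial otherwise
    (hD : ∀ n : ℕ, ∀ m : Fin L → ℕ, ∀ s : Set (ℕ → Fin L → ℝ), MeasurableSet s →
      P ({ω | D n ω = m} ∩ {ω | (fun i => W i ω) ∈ s})
        = ∫⁻ ω in {ω | (fun i => W i ω) ∈ s},
            ENNReal.ofReal (∏ l,
              if l ∈ L1 then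
                poissonPMF (∑ j ∈ Finset.range n,
                  g l (W 0 ω l * W j ω l / (∑ i ∈ Finset.range n, W i ω l))) (m l)
              else
                pbPMF (fun j : Fin n =>
                  g l (W 0 ω l * W (j : ℕ) ω l / (∑ i ∈ Finset.range n, W i ω l))) (m l)) ∂P)
    (m : Fin L → ℕ) :
    Tendsto (fun n : ℕ => (P {ω | D n ω = m}).toReal)
      atTop
      (nhds ((∫⁻ ω, ENNReal.ofReal (∏ l, poissonPMF (c l * W 0 ω l) (m l)) ∂P).toReal)) :=
  stmt0_general P L L1 W hWmeas hWindep hWident hWnonneg hWint g c M δ ν hgmeas hgnonneg hgle1 hc hM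
    hδ hν hC1 D hD m
end
end

section
/- For every ε > 0 and every β ∈ (0, α), (n/k_n)·P(W_1^β · W_{(1)}(n)/T(n) > ε) → 0 as n → ∞. -/
open MeasureTheory Filter Finset Asymptotics ProbabilityTheory

noncomputable section

def RegVaryTail {Ω : Type} [MeasurableSpace Ω] (P : Measure Ω) (X : Ω → ℝ) (α : ℝ) : Prop :=
  ∀ x : ℝ, 0 < x →
    Tendsto (fun t => (P {ω | t * x < X ω}).toReal / (P {ω | t < X ω}).toReal)
      atTop (nhds (x ^ (-α)))

/-!
Write `T = T(n)`, `M = W_{(1)}(n)` and `s = ε c n`, where `2c ≤ P(W₀ > 1)`. Off the event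
`∑ min(Wᵢ, 1) ≤ c n`, whose probability is `O(1/n)` by Chebyshev, we have `T > c n`, so a ratio
above `ε` forces `W₀^β M > s`. Truncating at `x = n^{1/p}` gives `M ≤ max(W₀, G)` with
`G = x + x^{1-p} ∑_{i ≥ 1} Wᵢ^p`. Hence either `W₀^{1+β} > s`, of probability `O(n^{-a/(1+β)})`
by the Potter-type bound `P(W₀ > t) ≤ C t^{-a}` (`a < α`), or `W₀^β G > s`, of probability
`O(n^{1/p-1})` by Markov's inequality and independence. As `n / kₙ = O(n^{1-1/α-κ})`, the choice
`1/p = 1/α + κ/2` and `a` close enough to `α` makes all three terms `o(kₙ / n)`.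
-/

theorem le_add_rpow_mul_rpow {w x p : ℝ} (hw : 0 ≤ w) (hx : 0 < x) (hp : 1 ≤ p) :
    w ≤ x + x ^ (1 - p) * w ^ p := by
  rcases le_or_gt w x with hwx | hxw
  · have : 0 ≤ x ^ (1 - p) * w ^ p := by positivity
    linarith
  · have hw0 : 0 < w := hx.trans hxw
    calc w = w ^ p * w ^ (1 - p) := by rw [← Real.rpow_add hw0]; norm_num
      _ ≤ w ^ p * x ^ (1 - p) := mul_le_mul_of_nonneg_left
        (Real.rpow_le_rpow_of_nonpos hx hxw.le (by linarith)) (by positivity)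
      _ ≤ x + x ^ (1 - p) * w ^ p := by rw [mul_comm]; exact le_add_of_nonneg_left hx.le

theorem le_mul_rpow_neg_of_doubling {f : ℝ → ℝ} {a t₀ : ℝ} (ha : 0 ≤ a) (ht₀ : 0 < t₀)
    (hf : ∀ t, f t ≤ 1) (hdouble : ∀ t, t₀ ≤ t → f (2 * t) ≤ 2 ^ (-a) * f t)
    {t : ℝ} (ht : 0 < t) : f t ≤ (2 * t₀) ^ a * t ^ (-a) := by
  have hsmall : ∀ t, 0 < t → t ≤ 2 * t₀ → f t ≤ (2 * t₀) ^ a * t ^ (-a) := by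
    intro t ht htt₀
    rw [Real.rpow_neg ht.le, ← div_eq_mul_inv, ← Real.div_rpow (by positivity) ht.le]
    exact (hf t).trans (Real.one_le_rpow ((one_le_div ht).2 htt₀) ha)
  have hdyadic : ∀ n : ℕ, ∀ t, 0 < t → t ≤ 2 ^ n * t₀ →
      f t ≤ (2 * t₀) ^ a * t ^ (-a) := by
    intro n
    induction n with
    | zero => exact fun t ht htn => hsmall t ht (by linarith)
    | succ n ih =>
      intro t ht htn
      rcases le_or_gt t (2 * t₀) with htt₀ | htt₀
      · exact hsmall t ht htt₀
      calc f t = f (2 * (t / 2)) := by ring_nf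
        _ ≤ 2 ^ (-a) * f (t / 2) := hdouble _ (by linarith)
        _ ≤ 2 ^ (-a) * ((2 * t₀) ^ a * (t / 2) ^ (-a)) := by
          gcongr
          exact ih _ (by positivity) (by rw [pow_succ] at htn; linarith)
        _ = (2 * t₀) ^ a * t ^ (-a) := by
          rw [mul_left_comm, ← Real.mul_rpow (by norm_num) (by positivity)]; ring_nf
  obtain ⟨n, hn⟩ := pow_unbounded_of_one_lt (t / t₀) (by norm_num : (1 : ℝ) < 2)
  exact hdyadic n t ht ((div_lt_iff₀ ht₀).1 hn).le

theorem ciSup_le_max_add_rpow_mul_sum {n : ℕ} (hn : 0 < n) {w : ℕ → ℝ} (hw : ∀ i, 0 ≤ w i)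
    {x p : ℝ} (hx : 0 < x) (hp : 1 ≤ p) :
    ⨆ i : Fin n, w i ≤ max (w 0) (x + x ^ (1 - p) * ∑ i ∈ Ico 1 n, w i ^ p) := by
  have : Nonempty (Fin n) := ⟨⟨0, hn⟩⟩
  refine ciSup_le fun i => ?_
  rcases Nat.eq_zero_or_pos i with hi | hi
  · rw [hi]; exact le_max_left _ _
  refine le_max_of_le_right ((le_add_rpow_mul_rpow (hw i) hx hp).trans ?_)
  gcongr
  exact single_le_sum (fun j _ => Real.rpow_nonneg (hw j) p) (mem_Ico.2 ⟨hi, i.isLt⟩)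

theorem sum_min_one_le_or_lt_of_lt_div {n : ℕ} (hn : 0 < n) {w : ℕ → ℝ} (hw : ∀ i, 0 ≤ w i)
    {ε c β x p : ℝ} (hε : 0 ≤ ε) (hc : 0 ≤ c) (hβ : 0 ≤ β) (hx : 0 < x) (hp : 1 ≤ p)
    (h : ε < w 0 ^ β * (⨆ i : Fin n, w i) / ∑ i ∈ range n, w i) :
    ∑ i ∈ range n, min (w i) 1 ≤ c * n ∨ (ε * c * n) ^ (1 + β)⁻¹ < w 0 ∨
      ε * c * n < w 0 ^ β * (x + x ^ (1 - p) * ∑ i ∈ Ico 1 n, w i ^ p) := by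
  refine or_iff_not_imp_left.2 fun hT => ?_
  have hT : c * n < ∑ i ∈ range n, w i :=
    (not_le.1 hT).trans_le (sum_le_sum fun i _ => min_le_left _ _)
  have hs : ε * c * n < w 0 ^ β * max (w 0) (x + x ^ (1 - p) * ∑ i ∈ Ico 1 n, w i ^ p) :=
    calc ε * c * n ≤ ε * ∑ i ∈ range n, w i := by
          rw [mul_assoc]; exact mul_le_mul_of_nonneg_left hT.le hε
      _ < w 0 ^ β * ⨆ i : Fin n, w i :=
          (lt_div_iff₀ ((mul_nonneg hc n.cast_nonneg).trans_lt hT)).1 h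
      _ ≤ _ := mul_le_mul_of_nonneg_left (ciSup_le_max_add_rpow_mul_sum hn hw hx hp)
          (Real.rpow_nonneg (hw 0) β)
  rw [mul_max_of_nonneg _ _ (Real.rpow_nonneg (hw 0) β), lt_max_iff] at hs
  refine hs.imp (fun hs => ?_) id
  rwa [Real.rpow_inv_lt_iff_of_pos (by positivity) (hw 0) (by positivity),
    add_comm, Real.rpow_add_one' (hw 0) (by positivity)]

theorem isBigO_natCast_rpow_rpow {e f : ℝ} (h : e ≤ f) :
    (fun n : ℕ => (n : ℝ) ^ e) =O[atTop] fun n => (n : ℝ) ^ f := by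
  refine IsBigO.of_bound 1 ?_
  filter_upwards [eventually_ge_atTop 1] with n hn
  rw [one_mul, Real.norm_of_nonneg (by positivity), Real.norm_of_nonneg (by positivity)]
  exact Real.rpow_le_rpow_of_exponent_le (by exact_mod_cast hn) h

theorem isBigO_natCast_div_of_isBigO {k : ℕ → ℝ} {a κ : ℝ}
    (h : (fun n : ℕ => (n : ℝ) ^ a / k n) =O[atTop] fun n : ℕ => (n : ℝ) ^ (-κ)) :
    (fun n : ℕ => (n : ℝ) / k n) =O[atTop] fun n : ℕ => (n : ℝ) ^ (1 - a - κ) := by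
  refine ((isBigO_refl (fun n : ℕ => (n : ℝ) ^ (1 - a)) atTop).mul h).congr' ?_ ?_ <;>
    filter_upwards [eventually_gt_atTop 0] with n hn
  · rw [← mul_div_assoc, ← Real.rpow_add (by positivity)]; simp
  · rw [← Real.rpow_add (by positivity)]; ring_nf

theorem tendsto_natCast_rpow_mul_rpow_neg {θ γ : ℝ} (h : θ < γ) :
    Tendsto (fun n : ℕ => (n : ℝ) ^ θ * (n : ℝ) ^ (-γ)) atTop (nhds 0) := by
  refine ((tendsto_rpow_neg_atTop (sub_pos.2 h)).comp tendsto_natCast_atTop_atTop).congr' ?_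
  filter_upwards [eventually_gt_atTop 0] with n hn
  rw [Function.comp_apply, ← Real.rpow_add (by positivity)]
  ring_nf

theorem exists_moment_exponents {α κ β : ℝ} (hα : 1 < α) (hκ : 0 < κ) (hκα : κ < (α - 1) / α)
    (hβ : 0 < β) (hβα : β < α) : ∃ p a, 1 < p ∧ p < a ∧ β < a ∧ a < α ∧
      1 - 1 / α - κ < min (min 1 (a / (1 + β))) (1 - 1 / p) := by
  have hα0 : 0 < α := one_pos.trans hα
  have hκα' : κ < 1 - 1 / α := by rwa [one_sub_div hα0.ne']
  have hα1 : 0 < 1 / α := one_div_pos.2 hα0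
  set p := (1 / α + κ / 2)⁻¹
  have hp1 : 1 < p := (one_lt_inv₀ (by positivity : 0 < 1 / α + κ / 2)).2 (by linarith)
  have hpα : p < α := calc
    p < (1 / α)⁻¹ := inv_strictAnti₀ hα1 (by linarith)
    _ = α := by rw [one_div, inv_inv]
  set θ := 1 - 1 / α - κ
  have hθβ : θ * (1 + β) < α := calc
    θ * (1 + β) < (1 - 1 / α) * (1 + α) := mul_lt_mul'' (by linarith) (by linarith)
      (by linarith) (by linarith)
    _ = α - 1 / α := by field_simp; ring
    _ < α := by linarith
  set m := max (max p β) (θ * (1 + β))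
  have hpm : p ≤ m := (le_max_left _ _).trans (le_max_left _ _)
  have hβm : β ≤ m := (le_max_right _ _).trans (le_max_left _ _)
  have hθm : θ * (1 + β) ≤ m := le_max_right _ _
  have hmα : m < α := max_lt (max_lt hpα hβα) hθβ
  refine ⟨p, (m + α) / 2, hp1, by linarith, by linarith, by linarith,
    lt_min (lt_min (by linarith) ?_) ?_⟩
  · rw [lt_div_iff₀ (by linarith)]
    linarith
  · rw [show 1 / p = 1 / α + κ / 2 by rw [one_div, inv_inv]]
    linarith

section Probability

variable {Ω : Type} [MeasurableSpace Ω] {P : Measure Ω}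

namespace RegVaryTail

variable {X : Ω → ℝ} {α : ℝ}

theorem measure_lt_ne_zero (h : RegVaryTail P X α) (t : ℝ) : P {ω | t < X ω} ≠ 0 := by
  intro h0
  have hnull : ∀ s, t ≤ s → P {ω | s < X ω} = 0 := fun s hs =>
    measure_mono_null (fun ω (hω : s < X ω) => hs.trans_lt hω) h0
  have hratio : Tendsto (fun _ : ℝ => (0 : ℝ)) atTop (nhds ((2 : ℝ) ^ (-α))) :=
    (h 2 two_pos).congr'
      (by filter_upwards [eventually_ge_atTop t] with s hs; simp [hnull s hs])
  exact (Real.rpow_pos_of_pos two_pos (-α)).ne' (tendsto_nhds_unique hratio tendsto_const_nhds)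

theorem exists_measureReal_lt_le [IsProbabilityMeasure P] (h : RegVaryTail P X α) {a : ℝ}
    (ha : 0 ≤ a) (haα : a < α) :
    ∃ C, ∀ t, 0 < t → P.real {ω | t < X ω} ≤ C * t ^ (-a) := by
  have hlt : (2 : ℝ) ^ (-α) < 2 ^ (-a) :=
    Real.rpow_lt_rpow_of_exponent_lt one_lt_two (by linarith)
  obtain ⟨t₁, ht₁⟩ := eventually_atTop.1 ((h 2 two_pos).eventually (gt_mem_nhds hlt))
  refine ⟨(2 * max t₁ 1) ^ a, fun t ht => le_mul_rpow_neg_of_doubling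
    (f := fun t => P.real {ω | t < X ω}) ha (by positivity) (fun _ => measureReal_le_one)
    (fun s hs => ?_) ht⟩
  have hpos : 0 < P.real {ω | s < X ω} :=
    ENNReal.toReal_pos (h.measure_lt_ne_zero s) (measure_ne_top _ _)
  rw [mul_comm 2 s]
  exact ((div_lt_iff₀ hpos).1 (ht₁ s ((le_max_left _ _).trans hs))).le

end RegVaryTail

theorem integrable_rpow_of_measureReal_lt_le [IsFiniteMeasure P] {X : Ω → ℝ}
    (hX : Measurable X) (hX0 : ∀ ω, 0 ≤ X ω) {C a r : ℝ}
    (htail : ∀ t, 0 < t → P.real {ω | t < X ω} ≤ C * t ^ (-a)) (hr : 0 < r) (hra : r < a) :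
    Integrable (fun ω => X ω ^ r) P := by
  have hXr0 : 0 ≤ᵐ[P] fun ω => X ω ^ r := ae_of_all _ fun ω => Real.rpow_nonneg (hX0 ω) r
  have hXr : Measurable fun ω => X ω ^ r := hX.pow_const r
  refine (lintegral_ofReal_ne_top_iff_integrable hXr.aestronglyMeasurable hXr0).1 ?_
  rw [lintegral_eq_lintegral_meas_lt P hXr0 hXr.aemeasurable,
    ← Set.Ioc_union_Ioi_eq_Ioi zero_le_one,
    lintegral_union measurableSet_Ioi (Set.Ioc_disjoint_Ioi le_rfl)]
  refine ENNReal.add_ne_top.2 ⟨ne_top_of_le_ne_top ?_ (setLIntegral_mono' measurableSet_Ioc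
    fun t _ => measure_mono (Set.subset_univ _)), ne_top_of_le_ne_top ?_ (setLIntegral_mono'
    measurableSet_Ioi fun t (ht : 1 < t) => ?_ :
      _ ≤ ∫⁻ t in Set.Ioi 1, ENNReal.ofReal (C * t ^ (r⁻¹ * -a)))⟩
  · simp [measure_ne_top]
  · have hexp : r⁻¹ * -a < -1 := by
      rw [mul_neg, neg_lt_neg_iff, ← div_eq_inv_mul, one_lt_div hr]; exact hra
    exact ((integrableOn_Ioi_rpow_of_lt hexp one_pos).const_mul C).lintegral_lt_top.ne
  · have ht0 : 0 < t := one_pos.trans ht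
    have hroot : {ω | t < X ω ^ r} ⊆ {ω | t ^ r⁻¹ < X ω} := fun ω (hω : t < X ω ^ r) =>
      (Real.rpow_inv_lt_iff_of_pos ht0.le (hX0 ω) hr).2 hω
    have hbound := htail (t ^ r⁻¹) (by positivity)
    rw [Real.rpow_mul ht0.le]
    exact (measure_mono hroot).trans ((ENNReal.le_ofReal_iff_toReal_le (measure_ne_top _ _)
      (measureReal_nonneg.trans hbound)).2 hbound)

theorem measureReal_sum_le_mul_le [IsFiniteMeasure P] {V : ℕ → Ω → ℝ}
    (hV : ∀ i, MemLp (V i) 2 P) (hindep : Pairwise fun i j => IndepFun (V i) (V j) P)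
    {v c : ℝ} (hvar : ∀ i, variance (V i) P ≤ v) (hc : 0 < c) (hmean : ∀ i, 2 * c ≤ P[V i])
    {n : ℕ} (hn : 0 < n) : P.real {ω | ∑ i ∈ range n, V i ω ≤ c * n} ≤ v / (c ^ 2 * n) := by
  set S := ∑ i ∈ range n, V i
  have hSω : ∀ ω, S ω = ∑ i ∈ range n, V i ω := fun ω => Finset.sum_apply ω _ _
  have hS : MemLp S 2 P := memLp_finsetSum' _ fun i _ => hV i
  have hvarS : variance S P ≤ n * v := by
    rw [IndepFun.variance_sum (fun i _ => hV i) fun i _ j _ hij => hindep hij]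
    simpa using sum_le_sum fun i (_ : i ∈ range n) => hvar i
  have hmeanS : 2 * c * n ≤ P[S] := by
    rw [integral_congr_ae (ae_of_all _ hSω),
      integral_finsetSum _ fun i _ => (hV i).integrable one_le_two]
    simpa [mul_comm] using sum_le_sum fun i (_ : i ∈ range n) => hmean i
  have hcn : 0 < c * n := by positivity
  have hsub : {ω | ∑ i ∈ range n, V i ω ≤ c * n} ⊆ {ω | c * n ≤ |S ω - P[S]|} := by
    intro ω (hω : ∑ i ∈ range n, V i ω ≤ c * n)
    show c * n ≤ |S ω - P[S]|
    rw [abs_sub_comm, hSω]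
    exact (by linarith : c * n ≤ P[S] - ∑ i ∈ range n, V i ω).trans (le_abs_self _)
  calc P.real {ω | ∑ i ∈ range n, V i ω ≤ c * n} ≤ variance S P / (c * n) ^ 2 :=
        (measureReal_mono hsub).trans (ENNReal.toReal_le_of_le_ofReal
          (div_nonneg (variance_nonneg _ _) (sq_nonneg _))
          (meas_ge_le_variance_div_sq hS hcn))
    _ ≤ n * v / (c * n) ^ 2 := by gcongr
    _ = v / (c ^ 2 * n) := by field_simp

variable {W : ℕ → Ω → ℝ}

theorem measureReal_sum_min_one_le [IsProbabilityMeasure P] (hWmeas : ∀ i, Measurable (W i))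
    (hWindep : iIndepFun W P) (hident : ∀ i, IdentDistrib (W i) (W 0) P P)
    (hWnonneg : ∀ i ω, 0 ≤ W i ω) {c : ℝ} (hc : 0 < c) (hc2 : 2 * c ≤ P.real {ω | 1 < W 0 ω})
    {n : ℕ} (hn : 0 < n) :
    P.real {ω | ∑ i ∈ range n, min (W i ω) 1 ≤ c * n} ≤ 1 / (c ^ 2 * n) := by
  have hφ : Measurable fun x : ℝ => min x 1 := measurable_id.min measurable_const
  have hmem : ∀ i ω, min (W i ω) 1 ∈ Set.Icc 0 1 := fun i ω =>
    ⟨le_min (hWnonneg i ω) zero_le_one, min_le_right _ _⟩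
  have hmeas : ∀ i, Measurable fun ω => min (W i ω) 1 := fun i => hφ.comp (hWmeas i)
  have hL2 : ∀ i, MemLp (fun ω => min (W i ω) 1) 2 P := fun i =>
    MemLp.of_bound (hmeas i).aestronglyMeasurable 1 (ae_of_all _ fun ω => by
      rw [Real.norm_eq_abs, abs_le]; exact ⟨by linarith [(hmem i ω).1], (hmem i ω).2⟩)
  have hS : MeasurableSet {ω | 1 < W 0 ω} := measurableSet_lt measurable_const (hWmeas 0)
  refine measureReal_sum_le_mul_le hL2 (fun i j hij => (hWindep.indepFun hij).comp hφ hφ)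
    (fun i => (variance_le_sq_of_bounded (ae_of_all _ (hmem i)) (hmeas i).aemeasurable).trans
      (by norm_num)) hc (fun i => ?_) hn
  calc 2 * c ≤ P.real {ω | 1 < W 0 ω} := hc2
    _ = ∫ ω, {ω | 1 < W 0 ω}.indicator 1 ω ∂P := (integral_indicator_one hS).symm
    _ ≤ P[fun ω => min (W 0 ω) 1] := integral_mono ((integrable_const 1).indicator hS)
        ((hL2 0).integrable one_le_two)
        (Set.indicator_le' (fun ω hω => le_min (le_of_lt hω) le_rfl) fun ω _ => (hmem 0 ω).1)
    _ = P[fun ω => min (W i ω) 1] := ((hident i).comp hφ).integral_eq.symm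

theorem integrable_rpow_mul_rpow (hWindep : iIndepFun W P)
    (hident : ∀ i, IdentDistrib (W i) (W 0) P P) {β p : ℝ}
    (hβ : Integrable (fun ω => W 0 ω ^ β) P) (hp : Integrable (fun ω => W 0 ω ^ p) P)
    {i : ℕ} (hi : i ≠ 0) : Integrable (fun ω => W 0 ω ^ β * W i ω ^ p) P :=
  ((hWindep.indepFun hi.symm).comp (measurable_id.pow_const β)
    (measurable_id.pow_const p)).integrable_mul hβ
    (((hident i).comp (measurable_id.pow_const p)).integrable_iff.2 hp)

theorem integral_rpow_mul_rpow (hWmeas : ∀ i, Measurable (W i)) (hWindep : iIndepFun W P)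
    (hident : ∀ i, IdentDistrib (W i) (W 0) P P) (β p : ℝ) {i : ℕ} (hi : i ≠ 0) :
    ∫ ω, W 0 ω ^ β * W i ω ^ p ∂P = P[fun ω => W 0 ω ^ β] * P[fun ω => W 0 ω ^ p] :=
  ((hWindep.indepFun hi.symm).comp (measurable_id.pow_const β)
    (measurable_id.pow_const p)).integral_mul_eq_mul_integral
    ((hWmeas 0).pow_const β).aestronglyMeasurable ((hWmeas i).pow_const p).aestronglyMeasurable
    |>.trans (congrArg _ ((hident i).comp (measurable_id.pow_const p)).integral_eq)

theorem integral_mul_rpow_add_sum_rpow_mul_rpow (hWmeas : ∀ i, Measurable (W i))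
    (hWindep : iIndepFun W P) (hident : ∀ i, IdentDistrib (W i) (W 0) P P) {β p : ℝ}
    (hβ : Integrable (fun ω => W 0 ω ^ β) P) (hp : Integrable (fun ω => W 0 ω ^ p) P)
    (x y : ℝ) (n : ℕ) :
    ∫ ω, x * W 0 ω ^ β + y * ∑ i ∈ Ico 1 n, W 0 ω ^ β * W i ω ^ p ∂P =
      x * P[fun ω => W 0 ω ^ β] +
        y * ((n - 1 : ℕ) * (P[fun ω => W 0 ω ^ β] * P[fun ω => W 0 ω ^ p])) := by
  have hne : ∀ i ∈ Ico 1 n, i ≠ 0 := fun i hi => Nat.one_le_iff_ne_zero.1 (mem_Ico.1 hi).1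
  have hint : ∀ i ∈ Ico 1 n, Integrable (fun ω => W 0 ω ^ β * W i ω ^ p) P := fun i hi =>
    integrable_rpow_mul_rpow hWindep hident hβ hp (hne i hi)
  rw [integral_add (hβ.const_mul x) ((integrable_finsetSum _ hint).const_mul _),
    integral_const_mul, integral_const_mul, integral_finsetSum _ hint,
    sum_congr rfl fun i hi => integral_rpow_mul_rpow hWmeas hWindep hident β p (hne i hi),
    sum_const, Nat.card_Ico, nsmul_eq_mul]

theorem measureReal_lt_rpow_mul_le [IsFiniteMeasure P] (hWmeas : ∀ i, Measurable (W i))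
    (hWindep : iIndepFun W P) (hident : ∀ i, IdentDistrib (W i) (W 0) P P)
    (hWnonneg : ∀ i ω, 0 ≤ W i ω) {β p x s : ℝ} (hβ : Integrable (fun ω => W 0 ω ^ β) P)
    (hp : Integrable (fun ω => W 0 ω ^ p) P) (hx : 0 ≤ x) (hs : 0 < s) (n : ℕ) :
    P.real {ω | s < W 0 ω ^ β * (x + x ^ (1 - p) * ∑ i ∈ Ico 1 n, W i ω ^ p)} ≤
      P[fun ω => W 0 ω ^ β] * (x + x ^ (1 - p) * n * P[fun ω => W 0 ω ^ p]) / s := by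
  set g : Ω → ℝ := fun ω => x * W 0 ω ^ β + x ^ (1 - p) * ∑ i ∈ Ico 1 n, W 0 ω ^ β * W i ω ^ p
  have hg : ∀ ω, W 0 ω ^ β * (x + x ^ (1 - p) * ∑ i ∈ Ico 1 n, W i ω ^ p) = g ω := fun ω => by
    simp only [g, ← mul_sum]; ring
  have hg0 : 0 ≤ᵐ[P] g := ae_of_all _ fun ω => by
    rw [← hg]
    exact mul_nonneg (Real.rpow_nonneg (hWnonneg 0 ω) _) (add_nonneg hx (mul_nonneg
      (Real.rpow_nonneg hx _) (sum_nonneg fun i _ => Real.rpow_nonneg (hWnonneg i ω) _)))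
  have hgint : Integrable g P := (hβ.const_mul x).add ((integrable_finsetSum _ fun i hi =>
    integrable_rpow_mul_rpow hWindep hident hβ hp
      (Nat.one_le_iff_ne_zero.1 (mem_Ico.1 hi).1)).const_mul _)
  have hmβ : 0 ≤ P[fun ω => W 0 ω ^ β] :=
    integral_nonneg fun ω => Real.rpow_nonneg (hWnonneg 0 ω) _
  have hmp : 0 ≤ P[fun ω => W 0 ω ^ p] :=
    integral_nonneg fun ω => Real.rpow_nonneg (hWnonneg 0 ω) _
  have hn1 : ((n - 1 : ℕ) : ℝ) ≤ n := by exact_mod_cast Nat.sub_le n 1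
  rw [le_div_iff₀ hs, mul_comm]
  calc s * P.real {ω | s < W 0 ω ^ β * (x + x ^ (1 - p) * ∑ i ∈ Ico 1 n, W i ω ^ p)}
      ≤ s * P.real {ω | s ≤ g ω} := mul_le_mul_of_nonneg_left (measureReal_mono
        fun ω (hω : s < _) => show s ≤ g ω from hg ω ▸ hω.le) hs.le
    _ ≤ P[g] := mul_meas_ge_le_integral_of_nonneg hg0 hgint s
    _ ≤ P[fun ω => W 0 ω ^ β] * (x + x ^ (1 - p) * n * P[fun ω => W 0 ω ^ p]) := by
      rw [integral_mul_rpow_add_sum_rpow_mul_rpow hWmeas hWindep hident hβ hp]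
      have : 0 ≤ x ^ (1 - p) := Real.rpow_nonneg hx _
      nlinarith [mul_le_mul_of_nonneg_right hn1 (mul_nonneg this (mul_nonneg hmβ hmp))]

theorem measureReal_lt_rpow_mul_iSup_div_sum_le [IsProbabilityMeasure P]
    (hWmeas : ∀ i, Measurable (W i)) (hWindep : iIndepFun W P)
    (hident : ∀ i, IdentDistrib (W i) (W 0) P P) (hWnonneg : ∀ i ω, 0 ≤ W i ω)
    {c C a ε β p : ℝ} (hc : 0 < c) (hc2 : 2 * c ≤ P.real {ω | 1 < W 0 ω})
    (htail : ∀ t, 0 < t → P.real {ω | t < W 0 ω} ≤ C * t ^ (-a))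
    (hβint : Integrable (fun ω => W 0 ω ^ β) P) (hpint : Integrable (fun ω => W 0 ω ^ p) P)
    (hε : 0 < ε) (hβ : 0 < β) (hp : 1 < p) {n : ℕ} (hn : 0 < n) :
    P.real {ω | ε < W 0 ω ^ β * (⨆ i : Fin n, W i ω) / ∑ i ∈ range n, W i ω} ≤
      (c ^ 2)⁻¹ * (n : ℝ) ^ (-1 : ℝ) +
        C * (ε * c) ^ (-(a / (1 + β))) * (n : ℝ) ^ (-(a / (1 + β))) +
        P[fun ω => W 0 ω ^ β] * (1 + P[fun ω => W 0 ω ^ p]) / (ε * c) * (n : ℝ) ^ (1 / p - 1) := by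
  have hn0 : (0 : ℝ) < n := by exact_mod_cast hn
  set x := (n : ℝ) ^ (1 / p)
  have hsub : {ω | ε < W 0 ω ^ β * (⨆ i : Fin n, W i ω) / ∑ i ∈ range n, W i ω} ⊆
      {ω | ∑ i ∈ range n, min (W i ω) 1 ≤ c * n} ∪ ({ω | (ε * c * n) ^ (1 + β)⁻¹ < W 0 ω} ∪
        {ω | ε * c * n < W 0 ω ^ β * (x + x ^ (1 - p) * ∑ i ∈ Ico 1 n, W i ω ^ p)}) :=
    fun ω hω => sum_min_one_le_or_lt_of_lt_div hn (fun i => hWnonneg i ω) hε.le hc.le hβ.le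
      (by positivity) hp.le hω
  have h0 : P.real {ω | ∑ i ∈ range n, min (W i ω) 1 ≤ c * n} ≤
      (c ^ 2)⁻¹ * (n : ℝ) ^ (-1 : ℝ) := by
    rw [Real.rpow_neg_one, ← mul_inv, ← one_div]
    exact measureReal_sum_min_one_le hWmeas hWindep hident hWnonneg hc hc2 hn
  have h1 : P.real {ω | (ε * c * n) ^ (1 + β)⁻¹ < W 0 ω} ≤
      C * (ε * c) ^ (-(a / (1 + β))) * (n : ℝ) ^ (-(a / (1 + β))) := by
    refine (htail _ (by positivity)).trans_eq ?_
    rw [← Real.rpow_mul (by positivity), Real.mul_rpow (by positivity) hn0.le, mul_assoc]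
    congr 3 <;> field_simp
  have h2 : P.real {ω | ε * c * n < W 0 ω ^ β * (x + x ^ (1 - p) * ∑ i ∈ Ico 1 n, W i ω ^ p)} ≤
      P[fun ω => W 0 ω ^ β] * (1 + P[fun ω => W 0 ω ^ p]) / (ε * c) * (n : ℝ) ^ (1 / p - 1) := by
    refine (measureReal_lt_rpow_mul_le hWmeas hWindep hident hWnonneg hβint hpint
      (by positivity) (by positivity) n).trans_eq ?_
    have hx : x ^ (1 - p) * n = x := by
      rw [← Real.rpow_mul hn0.le, ← Real.rpow_add_one hn0.ne']
      congr 1; field_simp; ring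
    calc _ = P[fun ω => W 0 ω ^ β] * (1 + P[fun ω => W 0 ω ^ p]) / (ε * c) * (x / n) := by
          rw [hx]; field_simp
      _ = _ := by rw [Real.rpow_sub_one hn0.ne']
  calc _ ≤ _ := measureReal_mono hsub
    _ ≤ _ := (measureReal_union_le _ _).trans (add_le_add le_rfl (measureReal_union_le _ _))
    _ ≤ _ := (add_le_add h0 (add_le_add h1 h2)).trans_eq (add_assoc _ _ _).symm

theorem isBigO_measureReal_lt_rpow_mul_iSup_div_sum [IsProbabilityMeasure P]
    (hWmeas : ∀ i, Measurable (W i)) (hWindep : iIndepFun W P)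
    (hident : ∀ i, IdentDistrib (W i) (W 0) P P) (hWnonneg : ∀ i ω, 0 ≤ W i ω) {α : ℝ}
    (hreg : RegVaryTail P (W 0) α) {ε β p a : ℝ} (hε : 0 < ε) (hβ : 0 < β) (hp : 1 < p)
    (hpa : p < a) (hβa : β < a) (haα : a < α) :
    (fun n : ℕ => P.real {ω | ε < W 0 ω ^ β * (⨆ i : Fin n, W i ω) / ∑ i ∈ range n, W i ω})
      =O[atTop] fun n => (n : ℝ) ^ (-min (min 1 (a / (1 + β))) (1 - 1 / p)) := by
  obtain ⟨C, hC⟩ := hreg.exists_measureReal_lt_le (by linarith) haα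
  have hint : ∀ r, 0 < r → r < a → Integrable (fun ω => W 0 ω ^ r) P := fun r hr hra =>
    integrable_rpow_of_measureReal_lt_le (hWmeas 0) (hWnonneg 0) hC hr hra
  set c := P.real {ω | 1 < W 0 ω} / 2
  have hc : 0 < c :=
    half_pos (ENNReal.toReal_pos (hreg.measure_lt_ne_zero 1) (measure_ne_top _ _))
  set η := a / (1 + β)
  set γ := min (min 1 η) (1 - 1 / p)
  have hγ : γ ≤ 1 ∧ γ ≤ η ∧ γ ≤ 1 - 1 / p :=
    ⟨(min_le_left _ _).trans (min_le_left _ _), (min_le_left _ _).trans (min_le_right _ _),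
      min_le_right _ _⟩
  refine (IsBigO.of_bound 1 ?_).trans
    ((((isBigO_natCast_rpow_rpow (e := -1) (by linarith)).const_mul_left (c ^ 2)⁻¹).add
      ((isBigO_natCast_rpow_rpow (e := -η) (by linarith)).const_mul_left
        (C * (ε * c) ^ (-η)))).add
      ((isBigO_natCast_rpow_rpow (e := 1 / p - 1) (by linarith)).const_mul_left
        (P[fun ω => W 0 ω ^ β] * (1 + P[fun ω => W 0 ω ^ p]) / (ε * c))))
  filter_upwards [eventually_gt_atTop 0] with n hn
  rw [one_mul, Real.norm_of_nonneg measureReal_nonneg]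
  exact (measureReal_lt_rpow_mul_iSup_div_sum_le hWmeas hWindep hident hWnonneg hc
    (by simp only [c]; linarith) hC (hint β hβ hβa) (hint p (by linarith) hpa) hε hβ hp
    hn).trans (Real.le_norm_self _)

end Probability

theorem stmt5_general {Ω : Type} [MeasurableSpace Ω] (P : Measure Ω) [IsProbabilityMeasure P]
    (W : ℕ → Ω → ℝ)
    (hWmeas : ∀ i, Measurable (W i))
    (hWindep : iIndepFun W P)
    (hWident : ∀ i, Measure.map (W i) P = Measure.map (W 0) P)
    (hWnonneg : ∀ i ω, 0 ≤ W i ω)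
    (α : ℝ) (hα : 1 < α)
    (hreg : RegVaryTail P (W 0) α)
    (k : ℕ → ℕ)
    (hk3 : ∃ κ : ℝ, 0 < κ ∧ κ < (α - 1) / α ∧
      (fun n : ℕ => (n : ℝ) ^ (1/α) / (k n : ℝ)) =O[atTop] fun n : ℕ => (n : ℝ) ^ (-κ))
    (ε β : ℝ) (hε : 0 < ε) (hβ0 : 0 < β) (hβα : β < α) :
    Tendsto (fun n : ℕ => ((n : ℝ) / (k n : ℝ)) *
        (P {ω | ε < (W 0 ω) ^ β * (⨆ i : Fin n, W (i : ℕ) ω)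
              / (∑ i ∈ Finset.range n, W i ω)}).toReal)
      atTop (nhds 0) := by
  have hident : ∀ i, IdentDistrib (W i) (W 0) P P := fun i =>
    ⟨(hWmeas i).aemeasurable, (hWmeas 0).aemeasurable, hWident i⟩
  obtain ⟨κ, hκ, hκα, hO⟩ := hk3
  obtain ⟨p, a, hp, hpa, hβa, haα, hθ⟩ := exists_moment_exponents hα hκ hκα hβ0 hβα
  exact ((isBigO_natCast_div_of_isBigO hO).mul (isBigO_measureReal_lt_rpow_mul_iSup_div_sum
    hWmeas hWindep hident hWnonneg hreg hε hβ0 hp hpa hβa haα)).trans_tendsto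
    (tendsto_natCast_rpow_mul_rpow_neg hθ)

/-- Lemma `Wsmall`: For i.i.d. nonnegative `W₁, W₂, …` with continuous,
regularly varying distribution of index `α > 1`, and `kₙ → ∞`, `kₙ/n → 0`,
`n^{1/α}/kₙ = O(n^{−κ})` for some `κ ∈ (0, (α−1)/α)`: for every `ε > 0` and
`β ∈ (0, α)`, `(n/kₙ)·P(W₁^β · W_{(1)}(n)/T(n) > ε) → 0` as `n → ∞`. -/
theorem stmt5 {Ω : Type} [MeasurableSpace Ω] (P : Measure Ω) [IsProbabilityMeasure P]
    (W : ℕ → Ω → ℝ)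
    (hWmeas : ∀ i, Measurable (W i))
    (hWindep : iIndepFun W P)
    (hWident : ∀ i, Measure.map (W i) P = Measure.map (W 0) P)
    (hWnonneg : ∀ i ω, 0 ≤ W i ω)
    (hWcont : ∀ x : ℝ, P {ω | W 0 ω = x} = 0)
    (α : ℝ) (hα : 1 < α)
    (hreg : RegVaryTail P (W 0) α)
    (k : ℕ → ℕ)
    (hk1 : Tendsto (fun n => (k n : ℝ)) atTop atTop)
    (hk2 : Tendsto (fun n => (k n : ℝ) / (n : ℝ)) atTop (nhds 0))
    (hk3 : ∃ κ : ℝ, 0 < κ ∧ κ < (α - 1) / α ∧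
      (fun n : ℕ => (n : ℝ) ^ (1/α) / (k n : ℝ)) =O[atTop] fun n : ℕ => (n : ℝ) ^ (-κ))
    (ε β : ℝ) (hε : 0 < ε) (hβ0 : 0 < β) (hβα : β < α) :
    Tendsto (fun n : ℕ => ((n : ℝ) / (k n : ℝ)) *
        (P {ω | ε < (W 0 ω) ^ β * (⨆ i : Fin n, W (i : ℕ) ω)
              / (∑ i ∈ Finset.range n, W i ω)}).toReal)
      atTop (nhds 0) :=
  stmt5_general P W hWmeas hWindep hWident hWnonneg α hα hreg k hk3 ε β hε hβ0 hβα
end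
end

section
/- Let X_1, …, X_n be independent Bernoulli random variables with success probabilities p_1, …, p_n. Then E[|Σ_{i=1}^n (X_i − p_i)|³] ≤ 2 Σ_{i=1}^n p_i + 2 (Σ_{i=1}^n p_i)^{3/2}. -/
/-!
Write `S = ∑ᵢ (Xᵢ - pᵢ)`, `σ² = ∑ᵢ pᵢ (1 - pᵢ)` and `m = ∑ᵢ pᵢ ≥ σ²`. The hypothesis on the
joint law reduces expectations to finite sums over `Fin n → Bool`. Peeling off one coordinate at
a time gives `E[S²] = σ²` and `E[S⁴] ≤ σ² + 3σ⁴`: the cross terms vanish because the summands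
are centred, and a single centred Bernoulli variable `Y` has `E[Y⁴] ≤ E[Y²]`. Cauchy–Schwarz
then gives `E[|S|³]² ≤ E[S²] E[S⁴] ≤ m² + 3m³`, hence `E[|S|³] ≤ 2m + 2m^{3/2}`.
-/

open MeasureTheory Finset

section WeightedMoments

variable {α : Type*} [Fintype α] (w s : α → ℝ)

theorem sum_mul_const_add (hw : ∑ a, w a = 1) (hs : ∑ a, w a * s a = 0) (c : ℝ) :
    ∑ a, w a * (c + s a) = c := by
  have : ∑ a, w a * (c + s a) = c * ∑ a, w a + ∑ a, w a * s a := by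
    rw [mul_sum, ← sum_add_distrib]
    exact sum_congr rfl fun _ _ => by ring
  rw [this, hw, hs]
  ring

theorem sum_mul_const_add_sq (hw : ∑ a, w a = 1) (hs : ∑ a, w a * s a = 0) (c : ℝ) :
    ∑ a, w a * (c + s a) ^ 2 = c ^ 2 + ∑ a, w a * s a ^ 2 := by
  have : ∑ a, w a * (c + s a) ^ 2
      = c ^ 2 * ∑ a, w a + 2 * c * ∑ a, w a * s a + ∑ a, w a * s a ^ 2 := by
    simp only [mul_sum, ← sum_add_distrib]
    exact sum_congr rfl fun _ _ => by ring
  rw [this, hw, hs]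
  ring

theorem sum_mul_const_add_pow_four (hw : ∑ a, w a = 1) (hs : ∑ a, w a * s a = 0) (c : ℝ) :
    ∑ a, w a * (c + s a) ^ 4 = c ^ 4 + 6 * c ^ 2 * ∑ a, w a * s a ^ 2
      + 4 * c * ∑ a, w a * s a ^ 3 + ∑ a, w a * s a ^ 4 := by
  have : ∑ a, w a * (c + s a) ^ 4
      = c ^ 4 * ∑ a, w a + 4 * c ^ 3 * ∑ a, w a * s a + 6 * c ^ 2 * ∑ a, w a * s a ^ 2
        + 4 * c * ∑ a, w a * s a ^ 3 + ∑ a, w a * s a ^ 4 := by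
    simp only [mul_sum, ← sum_add_distrib]
    exact sum_congr rfl fun _ _ => by ring
  rw [this, hw, hs]
  ring

theorem sq_sum_mul_abs_pow_three_le {w : α → ℝ} (hw : ∀ a, 0 ≤ w a) :
    (∑ a, w a * |s a| ^ 3) ^ 2 ≤ (∑ a, w a * s a ^ 2) * ∑ a, w a * s a ^ 4 :=
  sum_sq_le_sum_mul_sum_of_sq_le_mul _ (fun a _ => mul_nonneg (hw a) (sq_nonneg _))
    (fun a _ => mul_nonneg (hw a) (by positivity))
    (fun a _ => le_of_eq (by rw [pow_abs, mul_pow, sq_abs]; ring))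

end WeightedMoments

theorem le_two_mul_add_two_mul_rpow_of_sq_le {T m : ℝ} (hm : 0 ≤ m)
    (h : T ^ 2 ≤ m ^ 2 + 3 * m ^ 3) : T ≤ 2 * m + 2 * m ^ ((3 : ℝ) / 2) := by
  have hr : (m ^ ((3 : ℝ) / 2)) ^ 2 = m ^ 3 := by
    rw [← Real.rpow_natCast, ← Real.rpow_mul hm]
    norm_num
  have hr0 : 0 ≤ m ^ ((3 : ℝ) / 2) := Real.rpow_nonneg hm _
  refine le_of_pow_le_pow_left₀ two_ne_zero (by positivity) (h.trans ?_)
  nlinarith [mul_nonneg hm hr0]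

section BernoulliVector

variable {n : ℕ}

def bernoulliWeight (p : Fin n → ℝ) (x : Fin n → Bool) : ℝ :=
  ∏ i, if x i then p i else 1 - p i

def centeredSum (p : Fin n → ℝ) (x : Fin n → Bool) : ℝ :=
  ∑ i, ((if x i then (1 : ℝ) else 0) - p i)

theorem bernoulliWeight_nonneg {p : Fin n → ℝ} (hp0 : ∀ i, 0 ≤ p i) (hp1 : ∀ i, p i ≤ 1)
    (x : Fin n → Bool) : 0 ≤ bernoulliWeight p x :=
  prod_nonneg fun i _ => by
    split
    · exact hp0 i
    · linarith [hp1 i]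

theorem sum_bernoulliWeight (p : Fin n → ℝ) : ∑ x, bernoulliWeight p x = 1 := by
  classical
  unfold bernoulliWeight
  rw [← Fintype.prod_sum (fun i (b : Bool) => if b then p i else 1 - p i)]
  simp

theorem bernoulliWeight_cons (p : Fin (n + 1) → ℝ) (b : Bool) (y : Fin n → Bool) :
    bernoulliWeight p (Fin.cons b y)
      = (if b then p 0 else 1 - p 0) * bernoulliWeight (Fin.tail p) y := by
  simp only [bernoulliWeight, Fin.prod_univ_succ, Fin.cons_zero, Fin.cons_succ, Fin.tail]

theorem centeredSum_cons (p : Fin (n + 1) → ℝ) (b : Bool) (y : Fin n → Bool) :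
    centeredSum p (Fin.cons b y)
      = ((if b then (1 : ℝ) else 0) - p 0) + centeredSum (Fin.tail p) y := by
  simp only [centeredSum, Fin.sum_univ_succ, Fin.cons_zero, Fin.cons_succ, Fin.tail]

theorem sum_bernoulliWeight_mul_succ (p : Fin (n + 1) → ℝ) (g : ℝ → ℝ) :
    ∑ x, bernoulliWeight p x * g (centeredSum p x)
      = p 0 * ∑ y, bernoulliWeight (Fin.tail p) y * g (1 - p 0 + centeredSum (Fin.tail p) y)
        + (1 - p 0) *
          ∑ y, bernoulliWeight (Fin.tail p) y * g (-p 0 + centeredSum (Fin.tail p) y) := by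
  rw [← (Fin.consEquiv fun _ => Bool).sum_comp, Fintype.sum_prod_type, Fintype.sum_bool,
    mul_sum, mul_sum]
  congr 1 <;> refine sum_congr rfl fun y _ => ?_ <;>
    simp only [Fin.consEquiv, Equiv.coe_fn_mk, bernoulliWeight_cons, centeredSum_cons,
      ite_true, ite_false, Bool.false_eq_true, zero_sub, mul_assoc]

theorem sum_bernoulliWeight_mul_centeredSum (p : Fin n → ℝ) :
    ∑ x, bernoulliWeight p x * centeredSum p x = 0 := by
  induction n with
  | zero => simp [centeredSum]
  | succ n ih =>
    have hw := sum_bernoulliWeight (Fin.tail p)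
    rw [sum_bernoulliWeight_mul_succ p (fun s => s)]
    rw [sum_mul_const_add _ _ hw (ih _), sum_mul_const_add _ _ hw (ih _)]
    ring

theorem sum_bernoulliWeight_mul_centeredSum_sq (p : Fin n → ℝ) :
    ∑ x, bernoulliWeight p x * centeredSum p x ^ 2 = ∑ i, p i * (1 - p i) := by
  induction n with
  | zero => simp [centeredSum]
  | succ n ih =>
    have hw := sum_bernoulliWeight (Fin.tail p)
    have hs := sum_bernoulliWeight_mul_centeredSum (Fin.tail p)
    rw [sum_bernoulliWeight_mul_succ p (· ^ 2)]
    simp only [sum_mul_const_add_sq _ _ hw hs, ih, Fin.sum_univ_succ, Fin.tail]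
    ring

theorem sum_bernoulliWeight_mul_centeredSum_pow_four_le {p : Fin n → ℝ} (hp0 : ∀ i, 0 ≤ p i)
    (hp1 : ∀ i, p i ≤ 1) :
    ∑ x, bernoulliWeight p x * centeredSum p x ^ 4
      ≤ ∑ i, p i * (1 - p i) + 3 * (∑ i, p i * (1 - p i)) ^ 2 := by
  induction n with
  | zero => simp [centeredSum]
  | succ n ih =>
    have hw := sum_bernoulliWeight (Fin.tail p)
    have hs := sum_bernoulliWeight_mul_centeredSum (Fin.tail p)
    have h4 := ih (p := Fin.tail p) (fun i => hp0 i.succ) (fun i => hp1 i.succ)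
    rw [sum_bernoulliWeight_mul_succ p (· ^ 4)]
    simp only [sum_mul_const_add_pow_four _ _ hw hs, sum_bernoulliWeight_mul_centeredSum_sq,
      Fin.sum_univ_succ, Fin.tail] at h4 ⊢
    set t := p 0
    set σ2 := ∑ i : Fin n, p i.succ * (1 - p i.succ)
    set m4 := ∑ y, bernoulliWeight (Fin.tail p) y * centeredSum (Fin.tail p) y ^ 4
    have hσ2 : 0 ≤ σ2 := sum_nonneg fun i _ => mul_nonneg (hp0 i.succ) (by linarith [hp1 i.succ])
    -- the third-moment terms cancel, and `t(1 - t)⁴ + (1 - t)t⁴ = t(1 - t)(1 - 3t(1 - t))`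
    calc _ = t * (1 - t) - 3 * (t * (1 - t)) ^ 2 + 6 * (t * (1 - t)) * σ2 + m4 := by ring
      _ ≤ _ := by nlinarith [sq_nonneg (t * (1 - t))]

theorem sum_bernoulliWeight_mul_abs_centeredSum_pow_three_le {p : Fin n → ℝ}
    (hp0 : ∀ i, 0 ≤ p i) (hp1 : ∀ i, p i ≤ 1) :
    ∑ x, bernoulliWeight p x * |centeredSum p x| ^ 3
      ≤ 2 * ∑ i, p i + 2 * (∑ i, p i) ^ ((3 : ℝ) / 2) := by
  set σ2 := ∑ i, p i * (1 - p i)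
  set m := ∑ i, p i
  have hσ2 : 0 ≤ σ2 := sum_nonneg fun i _ => mul_nonneg (hp0 i) (by linarith [hp1 i])
  have hσ2m : σ2 ≤ m := sum_le_sum fun i _ => by nlinarith [hp0 i]
  have hCS := sq_sum_mul_abs_pow_three_le (centeredSum p) (bernoulliWeight_nonneg hp0 hp1)
  rw [sum_bernoulliWeight_mul_centeredSum_sq] at hCS
  have h4 := sum_bernoulliWeight_mul_centeredSum_pow_four_le hp0 hp1
  have hm : 0 ≤ m := hσ2.trans hσ2m
  refine le_two_mul_add_two_mul_rpow_of_sq_le hm ?_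
  calc _ ≤ σ2 * (σ2 + 3 * σ2 ^ 2) := hCS.trans (mul_le_mul_of_nonneg_left h4 hσ2)
    _ ≤ m * (m + 3 * m ^ 2) := by gcongr
    _ = m ^ 2 + 3 * m ^ 3 := by ring

end BernoulliVector

theorem lintegral_comp_le_sum_mul_measure_preimage {Ω β : Type*} [MeasurableSpace Ω] [Fintype β]
    (μ : Measure Ω) (Y : Ω → β) (F : β → ENNReal) :
    ∫⁻ ω, F (Y ω) ∂μ ≤ ∑ b, F b * μ (Y ⁻¹' {b}) := by
  -- `Y` need not be measurable, so bound `F ∘ Y` by a simple function on measurable hulls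
  have hle : ∀ ω, F (Y ω) ≤ ∑ b, (toMeasurable μ (Y ⁻¹' {b})).indicator (fun _ => F b) ω :=
    fun ω => by
      rw [← Set.indicator_of_mem (subset_toMeasurable μ (Y ⁻¹' {Y ω}) rfl) (fun _ => F (Y ω))]
      exact single_le_sum (f := fun b => (toMeasurable μ (Y ⁻¹' {b})).indicator (fun _ => F b) ω)
        (fun _ _ => zero_le) (mem_univ (Y ω))
  calc ∫⁻ ω, F (Y ω) ∂μ
      ≤ ∫⁻ ω, ∑ b, (toMeasurable μ (Y ⁻¹' {b})).indicator (fun _ => F b) ω ∂μ := lintegral_mono hle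
    _ = ∑ b, F b * μ (Y ⁻¹' {b}) := by
      rw [lintegral_finsetSum _ fun b _ =>
        measurable_const.indicator (measurableSet_toMeasurable μ _)]
      simp only [lintegral_indicator_const (measurableSet_toMeasurable μ _), measure_toMeasurable]

theorem stmt11_general {Ω : Type} [MeasurableSpace Ω] (P : Measure Ω)
    (n : ℕ) (X : Fin n → Ω → Bool) (p : Fin n → ℝ)
    (hp0 : ∀ i, 0 ≤ p i) (hp1 : ∀ i, p i ≤ 1)
    (hlaw : ∀ x : Fin n → Bool,
      P {ω | ∀ i, X i ω = x i} = ENNReal.ofReal (∏ i, if x i then p i else 1 - p i)) :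
    ∫⁻ ω, ENNReal.ofReal (|∑ i, ((if X i ω then (1:ℝ) else 0) - p i)| ^ 3) ∂P
      ≤ ENNReal.ofReal (2 * ∑ i, p i + 2 * (∑ i, p i) ^ ((3:ℝ)/2)) := by
  have hpre : ∀ x : Fin n → Bool, (fun ω i => X i ω) ⁻¹' {x} = {ω | ∀ i, X i ω = x i} :=
    fun x => Set.ext fun ω => funext_iff
  have hterm : ∀ x, 0 ≤ bernoulliWeight p x * |centeredSum p x| ^ 3 :=
    fun x => mul_nonneg (bernoulliWeight_nonneg hp0 hp1 x) (by positivity)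
  calc _ ≤ ∑ x, ENNReal.ofReal (|centeredSum p x| ^ 3) * P ((fun ω i => X i ω) ⁻¹' {x}) :=
        lintegral_comp_le_sum_mul_measure_preimage P (fun ω i => X i ω)
          (fun x => ENNReal.ofReal (|centeredSum p x| ^ 3))
    _ = ENNReal.ofReal (∑ x, bernoulliWeight p x * |centeredSum p x| ^ 3) := by
      rw [ENNReal.ofReal_sum_of_nonneg fun x _ => hterm x]
      refine sum_congr rfl fun x _ => ?_
      rw [hpre, hlaw, ← bernoulliWeight, mul_comm,
        ENNReal.ofReal_mul (bernoulliWeight_nonneg hp0 hp1 x)]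
    _ ≤ _ := ENNReal.ofReal_le_ofReal (sum_bernoulliWeight_mul_abs_centeredSum_pow_three_le hp0 hp1)

/-- Lemma `PB3`: For independent Bernoulli random variables
`X₁, …, Xₙ` with success probabilities `p₁, …, pₙ`,
`E[|Σᵢ (Xᵢ − pᵢ)|³] ≤ 2 Σᵢ pᵢ + 2 (Σᵢ pᵢ)^{3/2}`. -/
theorem stmt11 {Ω : Type} [MeasurableSpace Ω] (P : Measure Ω) [IsProbabilityMeasure P]
    (n : ℕ) (X : Fin n → Ω → Bool) (p : Fin n → ℝ)
    (hp0 : ∀ i, 0 ≤ p i) (hp1 : ∀ i, p i ≤ 1)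
    (hlaw : ∀ x : Fin n → Bool,
      P {ω | ∀ i, X i ω = x i} = ENNReal.ofReal (∏ i, if x i then p i else 1 - p i)) :
    ∫⁻ ω, ENNReal.ofReal (|∑ i, ((if X i ω then (1:ℝ) else 0) - p i)| ^ 3) ∂P
      ≤ ENNReal.ofReal (2 * ∑ i, p i + 2 * (∑ i, p i) ^ ((3:ℝ)/2)) :=
  stmt11_general P n X p hp0 hp1 hlaw
end
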